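/- Let 0 ≤ a < b ≤ 1, set β = b − a, let l ≥ 1 be an integer, divide J = [a,b] into 2l equal closed subintervals J^1,…,J^{2l} of length β/(2l), and set ε = β/(2l). Suppose f:[0,1]→[0,1] is a continuous map such that J ⊆ f(J^s) for every s ∈ {1,…,2l}. Then with d the Euclidean metric on [0,1], S([0,1],d,ε) ≥ log l. -/

import Mathlib

open Filter Set Metric Function
open scoped ENNReal NNReal

noncomputable section

universe u

/-- A pair `(X̂, Y)` of random variables on a probability space `(Ω, P)` satisfying
condition `(*)_{n,ε,μ}`: `X̂` has law `μ` and the expected average distortion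
`E[(1/n) ∑_{k<n} d(T^k X̂, Y_k)]` is at most `ε`. -/
structure DistortionPair {X : Type u} [MetricSpace X] [MeasurableSpace X]
    (T : X → X) (μ : MeasureTheory.Measure X) (ε : ℝ) (n : ℕ) where
  Ω : Type u
  [mΩ : MeasurableSpace Ω]
  P : MeasureTheory.Measure Ω
  probP : MeasureTheory.IsProbabilityMeasure P
  Xh : Ω → X
  Y : Ω → Fin n → X
  measXh : Measurable Xh
  measY : Measurable Y
  law : MeasureTheory.Measure.map Xh P = μ
  distortion : ∫ ω, (∑ k : Fin n, dist (T^[(k : ℕ)] (Xh ω)) (Y ω k)) / n ∂P ≤ ε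

open MeasureTheory

section Defs

variable {X : Type u} [MetricSpace X]

/-- The Bowen dynamical distance `d_n(x,y) = max_{0 ≤ k ≤ n-1} d(T^k x, T^k y)`. -/
def dynDist (T : X → X) (n : ℕ) (x y : X) : ℝ :=
  (((Finset.range n).sup (fun k => nndist (T^[k] x) (T^[k] y)) : ℝ≥0) : ℝ)

/-- The `(n,ε)`-dynamical ball around `x`. -/
def dynBall (T : X → X) (n : ℕ) (x : X) (ε : ℝ) : Set X :=
  {y | dynDist T n x y < ε}

/-- `N_d(n,ε)`: the maximal cardinality of an `(n,ε)`-separated subset of `X`. -/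
def dynSepNum (T : X → X) (n : ℕ) (ε : ℝ) : ℕ :=
  sSup {m | ∃ E : Finset X, (∀ x ∈ E, ∀ y ∈ E, x ≠ y → ε < dynDist T n x y) ∧ E.card = m}

/-- `S(X,d,ε) = limsup_n (1/n) log N_d(n,ε)`. -/
def dynS (T : X → X) (ε : ℝ) : ℝ≥0∞ :=
  Filter.atTop.limsup fun n : ℕ =>
    ENNReal.ofReal (Real.log (dynSepNum T n ε)) / (n : ℝ≥0∞)

/-- The upper metric mean dimension `mdim(X,d,T) = limsup_{ε → 0⁺} S(X,d,ε)/|log ε|`. -/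
def mdim (T : X → X) : ℝ≥0∞ :=
  Filter.limsup (fun ε : ℝ => dynS T ε / ENNReal.ofReal |Real.log ε|)
    (nhdsWithin 0 (Set.Ioi 0))

/-- The topological entropy `h_top(X,T) = lim_{ε → 0⁺} S(X,d,ε)`
(the limit exists by monotonicity, hence equals the `limsup`). -/
def htop (T : X → X) : ℝ≥0∞ :=
  Filter.limsup (fun ε : ℝ => dynS T ε) (nhdsWithin 0 (Set.Ioi 0))

/-- `N_μ(n,ε,δ)`: the minimal number of `(n,ε)`-dynamical balls needed to cover a set of
`μ`-measure strictly bigger than `1 - δ`. -/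
def dynCovNum [MeasurableSpace X] (T : X → X) (μ : Measure X) (n : ℕ) (ε δ : ℝ) : ℕ :=
  sInf {m | ∃ F : Finset X, F.card = m ∧
    ENNReal.ofReal (1 - δ) < μ (⋃ x ∈ F, dynBall T n x ε)}

/-- `h_μ(ε,T,δ) = limsup_n (1/n) log N_μ(n,ε,δ)`. -/
def dynH [MeasurableSpace X] (T : X → X) (μ : Measure X) (ε δ : ℝ) : ℝ≥0∞ :=
  Filter.atTop.limsup fun n : ℕ =>
    ENNReal.ofReal (Real.log (dynCovNum T μ n ε δ)) / (n : ℝ≥0∞)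

/-- The average dynamical distance `d̃_n(x,y) = (1/n) ∑_{k<n} d(T^k x, T^k y)`. -/
def avgDist (T : X → X) (n : ℕ) (x y : X) : ℝ :=
  (∑ k ∈ Finset.range n, dist (T^[k] x) (T^[k] y)) / n

/-- The `(n,ε)`-average dynamical ball around `x`. -/
def avgBall (T : X → X) (n : ℕ) (x : X) (ε : ℝ) : Set X :=
  {y | avgDist T n x y < ε}

/-- `Ñ_d(n,ε)`: the maximal cardinality of an `(n,ε)`-average separated subset of `X`. -/
def avgSepNum (T : X → X) (n : ℕ) (ε : ℝ) : ℕ :=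
  sSup {m | ∃ E : Finset X, (∀ x ∈ E, ∀ y ∈ E, x ≠ y → ε < avgDist T n x y) ∧ E.card = m}

/-- `S̃(X,d,ε) = limsup_n (1/n) log Ñ_d(n,ε)`. -/
def avgS (T : X → X) (ε : ℝ) : ℝ≥0∞ :=
  Filter.atTop.limsup fun n : ℕ =>
    ENNReal.ofReal (Real.log (avgSepNum T n ε)) / (n : ℝ≥0∞)

/-- `Ñ_μ(n,ε,δ)`: the minimal number of `(n,ε)`-average dynamical balls needed to cover a set
of `μ`-measure strictly bigger than `1 - δ`. -/
def avgCovNum [MeasurableSpace X] (T : X → X) (μ : Measure X) (n : ℕ) (ε δ : ℝ) : ℕ :=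
  sInf {m | ∃ F : Finset X, F.card = m ∧
    ENNReal.ofReal (1 - δ) < μ (⋃ x ∈ F, avgBall T n x ε)}

/-- `h̃_μ(ε,T,δ) = limsup_n (1/n) log Ñ_μ(n,ε,δ)`. -/
def avgH [MeasurableSpace X] (T : X → X) (μ : Measure X) (ε δ : ℝ) : ℝ≥0∞ :=
  Filter.atTop.limsup fun n : ℕ =>
    ENNReal.ofReal (Real.log (avgCovNum T μ n ε δ)) / (n : ℝ≥0∞)

/-- `h̃_μ(T,δ) = lim_{ε → 0⁺} h̃_μ(ε,T,δ)` (the limit exists by monotonicity, hence equals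
the `limsup`). -/
def avgHlim [MeasurableSpace X] (T : X → X) (μ : Measure X) (δ : ℝ) : ℝ≥0∞ :=
  Filter.limsup (fun ε : ℝ => avgH T μ ε δ) (nhdsWithin 0 (Set.Ioi 0))

end Defs

/-- `N(ε)`: the maximal cardinality of an `ε`-separated subset of `Y`. -/
def sepNum (Y : Type*) [MetricSpace Y] (ε : ℝ) : ℕ :=
  sSup {m | ∃ E : Finset Y, (∀ x ∈ E, ∀ y ∈ E, x ≠ y → ε < dist x y) ∧ E.card = m}

/-- The upper box (Minkowski) dimension `limsup_{ε → 0⁺} log N(ε) / |log ε|`. -/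
def upperBoxDim (Y : Type*) [MetricSpace Y] : ℝ≥0∞ :=
  Filter.limsup
    (fun ε : ℝ => ENNReal.ofReal (Real.log (sepNum Y ε)) / ENNReal.ofReal |Real.log ε|)
    (nhdsWithin 0 (Set.Ioi 0))

section Entropy

variable {X : Type u} [MeasurableSpace X]

/-- The entropy contribution `-μ(A) log μ(A)` of one cell (nonnegative when `μ(A) ≤ 1`). -/
def cellEnt (μ : Measure X) (A : Set X) : ℝ≥0∞ :=
  ENNReal.ofReal (-((μ A).toReal * Real.log (μ A).toReal))

/-- `H_μ(P ∨ T⁻¹P ∨ ⋯ ∨ T^{-(n-1)}P)` for the finite partition `P` indexed by `Fin m`. -/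
def refinedEnt (μ : Measure X) (T : X → X) {m : ℕ} (P : Fin m → Set X) (n : ℕ) : ℝ≥0∞ :=
  ∑ s : Fin n → Fin m, cellEnt μ (⋂ k : Fin n, T^[(k : ℕ)] ⁻¹' P (s k))

/-- `h_μ(P,T) = inf_{n ≥ 1} (1/n) H_μ(Pⁿ)`. -/
def entPart (μ : Measure X) (T : X → X) {m : ℕ} (P : Fin m → Set X) : ℝ≥0∞ :=
  ⨅ n : ℕ, refinedEnt μ T P (n + 1) / ((n + 1 : ℕ) : ℝ≥0∞)

/-- The measure-theoretic (Kolmogorov–Sinai) entropy `h_μ(T) = sup_P h_μ(P,T)`, the supremum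
over all finite measurable partitions of `X`. -/
def KSentropy (μ : Measure X) (T : X → X) : ℝ≥0∞ :=
  ⨆ (m : ℕ) (P : Fin m → Set X) (_ : ∀ i, MeasurableSet (P i))
    (_ : Pairwise (Function.onFun Disjoint P)) (_ : (⋃ i, P i) = Set.univ),
    entPart μ T P

end Entropy

section RD

open scoped Classical in
/-- The Kullback–Leibler divergence `∫ log (dp/dq) dp` (with value `∞` if `p` is not
absolutely continuous w.r.t. `q` or the integrand is not integrable). -/
def klDiv {α : Type*} [MeasurableSpace α] (p q : Measure α) : ℝ≥0∞ :=
  if p ≪ q ∧ Integrable (fun x => Real.log (p.rnDeriv q x).toReal) p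
  then ENNReal.ofReal (∫ x, Real.log (p.rnDeriv q x).toReal ∂p)
  else ⊤

/-- The mutual information `I(U,V)`: the Kullback–Leibler divergence of the joint law of
`(U,V)` with respect to the product of the laws of `U` and `V`. -/
def mutualInfo {Ω α β : Type*} [MeasurableSpace Ω] [MeasurableSpace α] [MeasurableSpace β]
    (P : Measure Ω) (U : Ω → α) (V : Ω → β) : ℝ≥0∞ :=
  klDiv (Measure.map (fun ω => (U ω, V ω)) P)
    ((Measure.map U P).prod (Measure.map V P))

/-- The rate distortion function `R_μ(ε) = inf (1/n) I(X̂,Y)`, the infimum over all `n ≥ 1`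
and all pairs `(X̂,Y)` satisfying condition `(*)_{n,ε,μ}`. -/
def rateDistortion {X : Type u} [MetricSpace X] [MeasurableSpace X]
    (T : X → X) (μ : Measure X) (ε : ℝ) : ℝ≥0∞ :=
  ⨅ (n : ℕ) (_ : 0 < n) (pair : DistortionPair T μ ε n),
    @mutualInfo pair.Ω X (Fin n → X) pair.mΩ _ _ pair.P pair.Xh pair.Y / (n : ℝ≥0∞)

end RD

end

/-! The `l` open intervals `int J^{2i+2}` (every other subinterval) are pairwise more than `ε`
apart, and by the intermediate value theorem each of them contains a preimage of every point of
`(a, b)`, which contains all of them. So every word of length `n` in `l` letters is the itinerary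
of some orbit segment through these intervals, and distinct words give `(n, ε)`-separated points:
`N_d(n, ε) ≥ lⁿ`. -/

section DynamicalSeparation

variable {X : Type*} [MetricSpace X] {T : X → X} {n : ℕ} {ε : ℝ}

def IsDynSeparated (T : X → X) (n : ℕ) (ε : ℝ) (E : Finset X) : Prop :=
  ∀ x ∈ E, ∀ y ∈ E, x ≠ y → ε < dynDist T n x y

lemma dist_iterate_le_dynDist {k : ℕ} (hk : k < n) (x y : X) :
    dist (T^[k] x) (T^[k] y) ≤ dynDist T n x y := by
  rw [dist_nndist, dynDist, NNReal.coe_le_coe]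
  exact Finset.le_sup (f := fun k => nndist (T^[k] x) (T^[k] y)) (Finset.mem_range.2 hk)

lemma lt_dynDist_iff (hε : 0 ≤ ε) {x y : X} :
    ε < dynDist T n x y ↔ ∃ k < n, ε < dist (T^[k] x) (T^[k] y) := by
  lift ε to ℝ≥0 using hε
  simp only [dynDist, dist_nndist, NNReal.coe_lt_coe, Finset.lt_sup_iff, Finset.mem_range]

/-- Separated points have distinct itineraries through a fixed finite cover by balls of
radius `ε / 2`. -/
lemma bddAbove_card_isDynSeparated [CompactSpace X] (T : X → X) (n : ℕ) (hε : 0 < ε) :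
    BddAbove {m | ∃ E : Finset X, IsDynSeparated T n ε E ∧ E.card = m} := by
  classical
  obtain ⟨t, -, ht, hcover⟩ :=
    finite_cover_balls_of_compact (isCompact_univ (X := X)) (half_pos hε)
  choose c hct hc using fun x => mem_iUnion₂.1 (hcover (mem_univ x))
  refine ⟨ht.toFinset.card ^ n, ?_⟩
  rintro _ ⟨E, hE, rfl⟩
  let code : X → Fin n → X := fun x k => c (T^[k] x)
  have hcode : ∀ x ∈ E, code x ∈ Fintype.piFinset fun _ : Fin n => ht.toFinset := by
    intro x _
    simpa [Fintype.mem_piFinset, code] using fun k : Fin n => hct (T^[k] x)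
  have hinj : InjOn code E := by
    intro x hx y hy hxy
    by_contra hne
    obtain ⟨k, hk, hlt⟩ := (lt_dynDist_iff hε.le).1 (hE x hx y hy hne)
    have hck : c (T^[k] x) = c (T^[k] y) := congrFun hxy ⟨k, hk⟩
    have hx' := hc (T^[k] x)
    have hy' := hc (T^[k] y)
    rw [hck, mem_ball] at hx'
    rw [mem_ball] at hy'
    linarith [dist_triangle_right (T^[k] x) (T^[k] y) (c (T^[k] y))]
  simpa using Finset.card_le_card_of_injOn code hcode hinj

lemma IsDynSeparated.card_le_dynSepNum [CompactSpace X] (hε : 0 < ε) {E : Finset X}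
    (hE : IsDynSeparated T n ε E) : E.card ≤ dynSepNum T n ε :=
  le_csSup (bddAbove_card_isDynSeparated T n hε) ⟨E, hE, rfl⟩

lemma ofReal_log_le_dynS_of_pow_le {l : ℕ} (hl : 0 < l) (h : ∀ n, l ^ n ≤ dynSepNum T n ε) :
    ENNReal.ofReal (Real.log l) ≤ dynS T ε := by
  refine le_limsup_of_frequently_le (Eventually.frequently ?_)
  filter_upwards [eventually_gt_atTop 0] with n hn
  have hN : ((l ^ n : ℕ) : ℝ) ≤ dynSepNum T n ε := by exact_mod_cast h n
  calc ENNReal.ofReal (Real.log l)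
      = ENNReal.ofReal (Real.log ((l ^ n : ℕ) : ℝ)) / n := by
        rw [Nat.cast_pow, Real.log_pow, ENNReal.ofReal_mul n.cast_nonneg, ENNReal.ofReal_natCast,
          mul_comm, ENNReal.mul_div_cancel_right (by exact_mod_cast hn.ne') (by simp)]
    _ ≤ ENNReal.ofReal (Real.log (dynSepNum T n ε)) / n := by
        gcongr

end DynamicalSeparation

section Horseshoe

variable {X ι : Type*} {T : X → X} {K : ι → Set X}

lemma exists_iterate_mem_of_subset_image (hne : ∀ i, (K i).Nonempty)
    (hcover : ∀ i j, K j ⊆ T '' K i) (n : ℕ) (w : ℕ → ι) :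
    ∃ x, ∀ k ≤ n, T^[k] x ∈ K (w k) := by
  induction n generalizing w with
  | zero =>
    obtain ⟨x, hx⟩ := hne (w 0)
    exact ⟨x, fun k hk => by rwa [Nat.le_zero.1 hk]⟩
  | succ n ih =>
    obtain ⟨y, hy⟩ := ih (fun k => w (k + 1))
    obtain ⟨x, hx, rfl⟩ := hcover (w 0) (w 1) (hy 0 n.zero_le)
    refine ⟨x, fun k hk => ?_⟩
    cases k with
    | zero => exact hx
    | succ k => exact (iterate_succ_apply T k x).symm ▸ hy k (by omega)

lemma card_pow_le_dynSepNum_of_horseshoe [MetricSpace X] [CompactSpace X] [Fintype ι]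
    [Nonempty ι] {ε : ℝ} (hε : 0 < ε) (hne : ∀ i, (K i).Nonempty)
    (hsep : Pairwise fun i j => ∀ x ∈ K i, ∀ y ∈ K j, ε < dist x y)
    (hcover : ∀ i j, K j ⊆ T '' K i) (n : ℕ) :
    Fintype.card ι ^ n ≤ dynSepNum T n ε := by
  classical
  let word : (Fin n → ι) → ℕ → ι := fun v k =>
    if hk : k < n then v ⟨k, hk⟩ else Classical.arbitrary ι
  choose x hx using fun v => exists_iterate_mem_of_subset_image hne hcover n (word v)
  have hvisit : ∀ v (k : Fin n), T^[k] (x v) ∈ K (v k) := fun v k => by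
    simpa [word] using hx v k k.isLt.le
  have hdist : ∀ v v', v ≠ v' → ∃ k : Fin n, ε < dist (T^[k] (x v)) (T^[k] (x v')) :=
    fun v v' hvv' =>
      let ⟨k, hk⟩ := Function.ne_iff.1 hvv'
      ⟨k, hsep hk _ (hvisit v k) _ (hvisit v' k)⟩
  have hinj : Injective x := by
    intro v v' hxx
    by_contra hvv'
    obtain ⟨k, hk⟩ := hdist v v' hvv'
    rw [hxx, dist_self] at hk
    exact hk.not_gt hε
  have hE : IsDynSeparated T n ε (Finset.univ.image x) := by
    simp only [IsDynSeparated, Finset.mem_image, Finset.mem_univ, true_and]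
    rintro _ ⟨v, rfl⟩ _ ⟨v', rfl⟩ hne
    obtain ⟨k, hk⟩ := hdist v v' fun h => hne (h ▸ rfl)
    exact hk.trans_le (dist_iterate_le_dynDist k.isLt _ _)
  simpa [Finset.card_image_of_injective _ hinj] using hE.card_le_dynSepNum hε

end Horseshoe

lemma Ioo_subset_image_Ioo_of_Icc_subset_image_Icc {α δ : Type*}
    [ConditionallyCompleteLinearOrder α] [TopologicalSpace α] [OrderTopology α]
    [DenselyOrdered α] [LinearOrder δ] [TopologicalSpace δ] [OrderClosedTopology δ]
    {f : α → δ} (hf : Continuous f) {a b : δ} {u v : α} (h : Icc a b ⊆ f '' Icc u v) :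
    Ioo a b ⊆ f '' Ioo u v := by
  intro t ht
  obtain ⟨p, hp, rfl⟩ := h (left_mem_Icc.2 (ht.1.le.trans ht.2.le))
  obtain ⟨q, hq, rfl⟩ := h (right_mem_Icc.2 (ht.1.le.trans ht.2.le))
  refine image_mono (uIoo_subset_Ioo hp hq) ?_
  rcases le_total p q with hpq | hqp
  · rw [uIoo_of_le hpq]
    exact intermediate_value_Ioo hpq hf.continuousOn ht
  · rw [uIoo_of_ge hqp]
    exact intermediate_value_Ioo' hqp hf.continuousOn ht

def subdivIoo (a ε : ℝ) (s : ℕ) : Set ℝ := Ioo (a + s * ε) (a + (s + 1) * ε)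

lemma subdivIoo_subset {a ε : ℝ} (hε : 0 ≤ ε) {s N : ℕ} (hs : s < N) :
    subdivIoo a ε s ⊆ Ioo a (a + N * ε) := by
  have hsN : (s : ℝ) + 1 ≤ N := by exact_mod_cast hs
  rintro x ⟨hx₁, hx₂⟩
  constructor <;> nlinarith

lemma lt_dist_of_mem_subdivIoo {a ε x y : ℝ} {s t : ℕ} (hst : s + 1 < t)
    (hx : x ∈ subdivIoo a ε s) (hy : y ∈ subdivIoo a ε t) : ε < dist x y := by
  have hst' : (s : ℝ) + 2 ≤ t := by exact_mod_cast hst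
  rw [dist_comm, Real.dist_eq]
  nlinarith [le_abs_self (y - x), hx.2, hy.1, hx.1, hy.2]

lemma pairwise_lt_dist_subdivIoo_odd (a ε : ℝ) :
    Pairwise fun i j : ℕ =>
      ∀ x ∈ subdivIoo a ε (2 * i + 1), ∀ y ∈ subdivIoo a ε (2 * j + 1), ε < dist x y := by
  intro i j hij x hx y hy
  rcases lt_or_gt_of_ne hij with h | h
  · exact lt_dist_of_mem_subdivIoo (by omega) hx hy
  · exact dist_comm y x ▸ lt_dist_of_mem_subdivIoo (by omega) hy hx

/-- **Lemma 5.2**: if `J = [a,b] ⊆ [0,1]` is split into `2l` equal subintervals of length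
`ε = (b-a)/(2l)` and the continuous map `f : [0,1] → [0,1]` satisfies `J ⊆ f(Jˢ)` for each
subinterval `Jˢ`, then `S([0,1],d,ε) ≥ log l`. -/
theorem interval_horseshoe_dynS_ge
    (a b : ℝ) (ha : 0 ≤ a) (hab : a < b) (hb : b ≤ 1) (l : ℕ) (hl : 1 ≤ l)
    (f : (Set.Icc (0:ℝ) 1) → (Set.Icc (0:ℝ) 1)) (hf : Continuous f)
    (hhorse : ∀ s ∈ Finset.range (2 * l),
      {x : (Set.Icc (0:ℝ) 1) | a ≤ (x : ℝ) ∧ (x : ℝ) ≤ b} ⊆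
        f '' {x : (Set.Icc (0:ℝ) 1) |
          a + (s : ℝ) * ((b - a) / (2 * l)) ≤ (x : ℝ) ∧
          (x : ℝ) ≤ a + ((s : ℝ) + 1) * ((b - a) / (2 * l))}) :
    ENNReal.ofReal (Real.log l) ≤ dynS f ((b - a) / (2 * l)) := by
  set ε := (b - a) / (2 * l) with hε_def
  have hl₀ : (0 : ℝ) < l := by exact_mod_cast hl
  have hε : 0 < ε := div_pos (sub_pos.2 hab) (by positivity)
  have hb_eq : a + (2 * l : ℕ) * ε = b := by rw [hε_def]; push_cast; field_simp; ring
  have hmem : ∀ t : ℝ, 0 ≤ t → t ≤ 2 * l → a + t * ε ∈ Icc (0:ℝ) 1 := fun t ht₀ ht₁ =>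
    ⟨by positivity, by push_cast at hb_eq; nlinarith⟩
  let K : Fin l → Set (Icc (0:ℝ) 1) := fun i => (↑) ⁻¹' subdivIoo a ε (2 * i + 1)
  have hhit : ∀ i, {x : Icc (0:ℝ) 1 | a < x ∧ (x : ℝ) < b} ⊆ f '' K i := by
    intro i
    have hs : 2 * (i : ℕ) + 1 < 2 * l := by omega
    have hs' : ((2 * i + 1 : ℕ) : ℝ) + 1 ≤ 2 * l := by exact_mod_cast hs
    exact Ioo_subset_image_Ioo_of_Icc_subset_image_Icc hf
      (a := ⟨a, ha, hab.le.trans hb⟩) (b := ⟨b, ha.trans hab.le, hb⟩)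
      (u := ⟨_, hmem _ (by positivity) (by linarith)⟩) (v := ⟨_, hmem _ (by positivity) hs'⟩)
      (hhorse _ (Finset.mem_range.2 hs))
  have hmid : (⟨(a + b) / 2, by constructor <;> linarith⟩ : Icc (0:ℝ) 1) ∈
      {x : Icc (0:ℝ) 1 | a < x ∧ (x : ℝ) < b} := ⟨by linarith, by linarith⟩
  have hne : ∀ i, (K i).Nonempty := fun i => Set.Nonempty.of_image ⟨_, hhit i hmid⟩
  have hsep : Pairwise fun i j => ∀ x ∈ K i, ∀ y ∈ K j, ε < dist x y := by
    intro i j hij x hx y hy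
    rw [Subtype.dist_eq]
    exact pairwise_lt_dist_subdivIoo_odd a ε (Fin.val_injective.ne hij) _ hx _ hy
  have hcover : ∀ i j, K j ⊆ f '' K i := fun i j x hx =>
    hhit i (hb_eq ▸ subdivIoo_subset hε.le (by omega) hx)
  have : Nonempty (Fin l) := ⟨⟨0, hl⟩⟩
  refine ofReal_log_le_dynS_of_pow_le hl fun n => ?_
  simpa using card_pow_le_dynSepNum_of_horseshoe hε hne hsep hcover n
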